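/- arXiv:1408.0435 — 4 statements merged into one kernel-verified Lean document; each statement's English description precedes it below -/
import Mathlib

section
/- Let T be a measure-preserving transformation on a probability space (Ω, Σ, μ) with a countable collection of measurable sets {C_s}. Fix k ≥ 1 and a point x ∈ Ω such that for every s, lim_{N→∞} (1/N)·#{0 ≤ n < N : Tⁿx ∈ C_s} = μ(C_s). Then for every s, limsup_{N→∞} (1/N)·#{0 ≤ n < N : (T^k)ⁿx ∈ C_s} ≤ k·μ(C_s). -/
/-! A visit of the `T^[k]`-orbit of `x` to `C` at time `n < N` is a visit of the `T`-orbit at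
time `k * n < k * N`, so the `T^[k]`-frequency up to `N` is at most `k` times the `T`-frequency
up to `k * N`, and the latter tends to `μ C`. -/

open MeasureTheory Filter

/-- Orbit frequency: proportion of times `0 ≤ n < N` with `T^[n] x ∈ S`. -/
noncomputable def orbitFreq {Ω : Type*} (T : Ω → Ω) (x : Ω) (S : Set Ω) (N : ℕ) : ℝ :=
  (Nat.card {n : ℕ | n < N ∧ T^[n] x ∈ S} : ℝ) / N

theorem Filter.limsup_le_of_eventually_le_of_tendsto {β α : Type*}
    [ConditionallyCompleteLinearOrder α] [TopologicalSpace α] [OrderTopology α]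
    {l : Filter β} [l.NeBot] {f g : β → α} {a : α}
    (hf : l.IsBoundedUnder (· ≥ ·) f) (hfg : f ≤ᶠ[l] g) (hg : Tendsto g l (nhds a)) :
    limsup f l ≤ a :=
  (limsup_le_limsup hfg hf.isCoboundedUnder_le hg.isBoundedUnder_le).trans_eq hg.limsup_eq

section OrbitFreq

variable {Ω : Type*} (T : Ω → Ω) (x : Ω) (S : Set Ω)

lemma orbitFreq_nonneg (N : ℕ) : 0 ≤ orbitFreq T x S N := by
  unfold orbitFreq
  positivity

lemma card_visits_iterate_le {k : ℕ} (hk : 0 < k) (N : ℕ) :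
    Nat.card {n : ℕ | n < N ∧ (T^[k])^[n] x ∈ S}
      ≤ Nat.card {m : ℕ | m < k * N ∧ T^[m] x ∈ S} := by
  simp only [Nat.card_coe_set_eq]
  refine Set.ncard_le_ncard_of_injOn (k * ·) ?_ ?_ ((Set.finite_Iio (k * N)).subset fun m hm => hm.1)
  · rintro n ⟨hnN, hnS⟩
    exact ⟨Nat.mul_lt_mul_of_pos_left hnN hk, by rwa [Function.iterate_mul]⟩
  · exact fun a _ b _ hab => Nat.eq_of_mul_eq_mul_left hk hab

lemma orbitFreq_iterate_le {k : ℕ} (hk : 0 < k) (N : ℕ) :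
    orbitFreq (T^[k]) x S N ≤ k * orbitFreq T x S (k * N) := by
  have hk' : (k : ℝ) ≠ 0 := by exact_mod_cast hk.ne'
  calc orbitFreq (T^[k]) x S N
      ≤ (Nat.card {m : ℕ | m < k * N ∧ T^[m] x ∈ S} : ℝ) / N := by
        unfold orbitFreq
        gcongr
        exact card_visits_iterate_le T x S hk N
    _ = k * orbitFreq T x S (k * N) := by
        rw [orbitFreq, Nat.cast_mul, ← mul_div_assoc, mul_div_mul_left _ _ hk']

end OrbitFreq

theorem limsup_freq_iterate_le_general {Ω : Type*} [MeasurableSpace Ω] (μ : Measure Ω)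
    (T : Ω → Ω) {ι : Type*} (C : ι → Set Ω)
    (k : ℕ) (hk : 1 ≤ k) (x : Ω)
    (hnorm : ∀ s, Filter.Tendsto (fun N => orbitFreq T x (C s) N) Filter.atTop
        (nhds ((μ (C s)).toReal))) :
    ∀ s, Filter.limsup (fun N => orbitFreq (T^[k]) x (C s) N) Filter.atTop
      ≤ k * (μ (C s)).toReal := by
  intro s
  have hk₀ : 0 < k := hk
  have hsub : Tendsto (fun N => orbitFreq T x (C s) (k * N)) atTop (nhds (μ (C s)).toReal) :=
    (hnorm s).comp (tendsto_id.const_mul_atTop' hk₀)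
  exact limsup_le_of_eventually_le_of_tendsto
    (isBoundedUnder_of ⟨0, orbitFreq_nonneg (T^[k]) x (C s)⟩)
    (Eventually.of_forall (orbitFreq_iterate_le T x (C s) hk₀)) (hsub.const_mul (k : ℝ))

/-- If the orbit frequencies of `x` under `T` in each set `C s` converge to `μ (C s)`,
then the orbit frequencies of `x` under the `k`-th iterate `T^k` have limsup
at most `k * μ (C s)`. -/
theorem limsup_freq_iterate_le {Ω : Type*} [MeasurableSpace Ω] (μ : Measure Ω)
    [IsProbabilityMeasure μ] (T : Ω → Ω) (hT : MeasurePreserving T μ μ)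
    {ι : Type*} [Countable ι] (C : ι → Set Ω) (hCmeas : ∀ s, MeasurableSet (C s))
    (k : ℕ) (hk : 1 ≤ k) (x : Ω)
    (hnorm : ∀ s, Filter.Tendsto (fun N => orbitFreq T x (C s) N) Filter.atTop
        (nhds ((μ (C s)).toReal))) :
    ∀ s, Filter.limsup (fun N => orbitFreq (T^[k]) x (C s) N) Filter.atTop
      ≤ k * (μ (C s)).toReal :=
  limsup_freq_iterate_le_general μ T C k hk x hnorm
end

section
/- Let T be the base-3 shift Tx = 3x mod 1, let x = 0.\overline{20101012012222222222} (the number with periodic base-3 expansion of period 20 given by digits 2,0,1,0,1,0,1,2,0,1,2,2,2,2,2,2,2,2,2,2), and let C_s be the cylinder of the two-digit string s = [0,1]. Then lim_{N→∞} (1/N)·#{0 ≤ n < N : (T²)ⁿ x ∈ C_s} = 1/10, while lim_{N→∞} (1/(2N))·#{0 ≤ n < 2N : Tⁿ x ∈ ⋃_{i∈{1,3,5}} E(i)} = 3/20, where E(i) = {y ∈ C_s : T^{2+i} y ∈ C_s}. -/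
open MeasureTheory Filter

/-- The base-3 shift `x ↦ 3x mod 1` on `[0,1)`. -/
noncomputable def T3 (y : ℝ) : ℝ := Int.fract (3 * y)

/-- The period-20 digit pattern `2,0,1,0,1,0,1,2,0,1,2,2,2,2,2,2,2,2,2,2`. -/
def digits20 : Fin 20 → ℕ := ![2, 0, 1, 0, 1, 0, 1, 2, 0, 1, 2, 2, 2, 2, 2, 2, 2, 2, 2, 2]

/-- The number `x = 0.\overline{20101012012222222222}` in base 3. -/
noncomputable def xCounter : ℝ :=
  (∑ i : Fin 20, (digits20 i : ℝ) * 3 ^ (19 - (i : ℕ))) / (3 ^ 20 - 1)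

/-- The cylinder of the two-digit base-3 string `[0,1]`: first digit `0`, second digit `1`. -/
def Cyl01 : Set ℝ := Set.Ico (1 / 9 : ℝ) (2 / 9)

/-- `E i = {y ∈ C_s : T^{2+i} y ∈ C_s}`. -/
noncomputable def Eset (i : ℕ) : Set ℝ := {y ∈ Cyl01 | T3^[2 + i] y ∈ Cyl01}

/-!
The point `x` is a rational number with denominator `3 ^ 20 - 1`, so its `T`-orbit is periodic
with period `20`, and `Tⁿ x ∈ C_{[0,1]}` exactly when `n ≡ 1, 3, 5, 8 (mod 20)`. The frequency of
visits of an orbit to a set is then the density of a periodic set of times, i.e. its density over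
one period: among the times `2n` only `2n ≡ 8` qualifies (frequency `1/10`), whereas
`Tⁿ x ∈ E(1) ∪ E(3) ∪ E(5)` for `n ≡ 5, 3, 1` respectively, since `5 + 3 = 3 + 5 = 1 + 7 = 8`
(frequency `3/20`).
-/

open Function Nat Topology

namespace Nat

variable {p : ℕ → Prop} [DecidablePred p] {m : ℕ}

theorem card_setOf_lt_and_eq_count (N : ℕ) : Nat.card {n | n < N ∧ p n} = count p N := by
  rw [count_eq_card_filter_range, ← Nat.card_eq_finsetCard]
  exact Nat.card_congr (Equiv.subtypeEquivRight fun n => by simp)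

theorem count_mul_of_periodic (hp : Periodic p m) (q : ℕ) : count p (m * q) = q * count p m := by
  induction q with
  | zero => simp
  | succ q ih =>
    have hshift : (fun k => p (k + m)) = p := funext hp
    simp only [Nat.mul_succ, count_add', hshift, ih, Nat.succ_mul]

theorem abs_count_sub_le_of_periodic (hp : Periodic p m) (hm : 0 < m) (N : ℕ) :
    |(count p N : ℝ) - N * count p m / m| ≤ count p m := by
  set q := N / m
  have hlow : q * count p m ≤ count p N :=
    count_mul_of_periodic hp q ▸ count_monotone p (Nat.mul_div_le N m)
  have hNm : N ≤ m * (q + 1) := (Nat.lt_mul_div_succ N hm).le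
  have hhigh : count p N ≤ (q + 1) * count p m :=
    count_mul_of_periodic hp (q + 1) ▸ count_monotone p hNm
  have hm' : (0 : ℝ) < m := by exact_mod_cast hm
  have hqN : (q : ℝ) ≤ N / m := by
    rw [le_div_iff₀ hm']; exact_mod_cast (Nat.div_mul_le_self N m)
  have hNq : (N : ℝ) / m ≤ q + 1 := by
    rw [div_le_iff₀ hm', mul_comm]; exact_mod_cast hNm
  have hlow' : (q : ℝ) * count p m ≤ count p N := by exact_mod_cast hlow
  have hhigh' : (count p N : ℝ) ≤ (q + 1) * count p m := by exact_mod_cast hhigh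
  have hk : (0 : ℝ) ≤ count p m := by positivity
  rw [mul_div_right_comm, abs_sub_le_iff]
  constructor <;> nlinarith [mul_le_mul_of_nonneg_right hqN hk, mul_le_mul_of_nonneg_right hNq hk]

theorem tendsto_count_div_of_periodic (hp : Periodic p m) (hm : 0 < m) :
    Tendsto (fun N => (count p N : ℝ) / N) atTop (𝓝 ((count p m : ℝ) / m)) := by
  rw [tendsto_iff_norm_sub_tendsto_zero]
  refine squeeze_zero' (Eventually.of_forall fun _ => norm_nonneg _) ?_
    (tendsto_const_div_atTop_nhds_zero_nat (count p m : ℝ))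
  filter_upwards [eventually_gt_atTop 0] with N hN
  have hN' : (0 : ℝ) < N := by exact_mod_cast hN
  rw [Real.norm_eq_abs, show (count p N : ℝ) / N - count p m / m
      = ((count p N : ℝ) - N * count p m / m) / N by field_simp, abs_div, abs_of_pos hN']
  exact div_le_div_of_nonneg_right (abs_count_sub_le_of_periodic hp hm N) hN'.le

end Nat

theorem T3_iterate_fract (n : ℕ) (y : ℝ) : T3^[n] (Int.fract y) = Int.fract (3 ^ n * y) := by
  induction n with
  | zero => simp
  | succ n ih =>
    rw [iterate_succ_apply', ih, T3]
    refine Int.fract_eq_fract.2 ⟨(-3 * ⌊3 ^ n * y⌋ : ℤ), ?_⟩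
    rw [Int.fract]
    push_cast
    ring

theorem xCounter_eq_fract : xCounter = Int.fract (((2470787306 : ℕ) : ℝ) / (3486784400 : ℕ)) := by
  rw [Int.fract_div_natCast_eq_div_natCast_mod]
  norm_num [xCounter, Fin.sum_univ_succ, digits20]

theorem T3_iterate_xCounter (n : ℕ) :
    T3^[n] xCounter = ((3 ^ n * 2470787306 % 3486784400 : ℕ) : ℝ) / (3486784400 : ℕ) := by
  rw [xCounter_eq_fract, T3_iterate_fract, ← mul_div_assoc,
    ← Int.fract_div_natCast_eq_div_natCast_mod]
  push_cast
  rfl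

-- `x` is purely periodic because its denominator is `3 ^ 20 - 1`.
theorem periodic_T3_iterate_xCounter : Periodic (fun n => T3^[n] xCounter) 20 := by
  intro n
  show T3^[n + 20] xCounter = T3^[n] xCounter
  have h : 3 ^ (n + 20) * 2470787306 ≡ 3 ^ n * 2470787306 [MOD 3486784400] := by
    have h20 : 3 ^ 20 ≡ 1 [MOD 3486784400] := by unfold Nat.ModEq; norm_num
    calc 3 ^ (n + 20) * 2470787306 = 3 ^ n * 2470787306 * 3 ^ 20 := by ring
      _ ≡ 3 ^ n * 2470787306 * 1 [MOD 3486784400] := h20.mul_left _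
      _ = 3 ^ n * 2470787306 := mul_one _
  rw [T3_iterate_xCounter, T3_iterate_xCounter, h]

theorem natCast_div_mem_Cyl01 (r d : ℕ) (hd : 0 < d) :
    (r : ℝ) / d ∈ Cyl01 ↔ d ≤ 9 * r ∧ 9 * r < 2 * d := by
  have hd' : (0 : ℝ) < d := by exact_mod_cast hd
  rw [Cyl01, Set.mem_Ico, div_le_div_iff₀ (by norm_num) hd', div_lt_div_iff₀ hd' (by norm_num)]
  norm_cast
  omega

/-- The orbit of `x` lies in `C_{[0,1]}` exactly at the positions where the digit string
`20101012012222222222` has a `0` followed by a `1`. -/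
theorem T3_iterate_xCounter_mem_Cyl01 (n : ℕ) :
    T3^[n] xCounter ∈ Cyl01 ↔ n % 20 ∈ ({1, 3, 5, 8} : Finset ℕ) := by
  rw [← periodic_T3_iterate_xCounter.map_mod_nat n, T3_iterate_xCounter, natCast_div_mem_Cyl01 _ _ (by norm_num)]
  have hresidues : ∀ r < 20, (3486784400 ≤ 9 * (3 ^ r * 2470787306 % 3486784400) ∧
      9 * (3 ^ r * 2470787306 % 3486784400) < 2 * 3486784400 ↔ r ∈ ({1, 3, 5, 8} : Finset ℕ)) := by
    decide
  exact hresidues _ (Nat.mod_lt n (by norm_num))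

/-- The counterexample to Schweiger's inequality: the `T²`-orbit of `x` visits `C_{[0,1]}`
with frequency `1/10`, while the `T`-orbit visits `E(1) ∪ E(3) ∪ E(5)` with frequency
`3/20` (relative to `2N`). -/
theorem schweiger_counterexample :
    Filter.Tendsto
      (fun N => (Nat.card {n : ℕ | n < N ∧ T3^[2 * n] xCounter ∈ Cyl01} : ℝ) / N)
      Filter.atTop (nhds (1 / 10)) ∧
    Filter.Tendsto
      (fun N => (Nat.card {n : ℕ | n < 2 * N ∧
          T3^[n] xCounter ∈ Eset 1 ∪ Eset 3 ∪ Eset 5} : ℝ) / (2 * N))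
      Filter.atTop (nhds (3 / 20)) := by
  classical
  have hperiod (U : Set ℝ) : Periodic (fun n => T3^[n] xCounter ∈ U) 20 :=
    periodic_T3_iterate_xCounter.comp (· ∈ U)
  simp only [card_setOf_lt_and_eq_count]
  constructor
  · have hp : Periodic (fun n => T3^[2 * n] xCounter ∈ Cyl01) 10 := fun n => by
      simpa only [mul_add] using hperiod Cyl01 (2 * n)
    have hcount : count (fun n => T3^[2 * n] xCounter ∈ Cyl01) 10 = 1 := by
      simp only [T3_iterate_xCounter_mem_Cyl01]
      decide
    simpa [hcount] using tendsto_count_div_of_periodic hp (by norm_num)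
  · have hcount : count (fun n => T3^[n] xCounter ∈ Eset 1 ∪ Eset 3 ∪ Eset 5) 20 = 3 := by
      simp only [Eset, Set.mem_union, Set.mem_ofPred_eq, ← iterate_add_apply,
        T3_iterate_xCounter_mem_Cyl01]
      decide
    have h2N : Tendsto (fun N : ℕ => 2 * N) atTop atTop :=
      tendsto_id.const_mul_atTop' two_pos
    have h := (tendsto_count_div_of_periodic (hperiod (Eset 1 ∪ Eset 3 ∪ Eset 5))
      (by norm_num)).comp h2N
    rw [hcount] at h
    convert h using 2 with N
    · simp only [comp_apply, Nat.cast_mul, Nat.cast_ofNat]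
    · norm_num
end

section
/- For a general continued fraction with αₙ ∈ ℕ, εₙ = ±1 and αₙ + εₙ > 1, the singularization identity holds: the value of the continued fraction with digits (..., (α_n,ε_n), (1,1), (α_{n+2},ε_{n+2}), ...) equals the value of the continued fraction with digits (..., (α_n+ε_n, −ε_n), (α_{n+2}+1, ε_{n+2}), ...). -/
/-- The singularization identity for semi-regular continued fractions: for digits
`(α, ε)`, `(1,1)`, `(β, δ)` with `α, β ∈ ℕ`, `ε = ±1`, `α + ε > 1`, and any tail
value `y > 0`, `α + ε/(1 + 1/(β + y)) = (α + ε) − ε/((β + 1) + y)`.  This expresses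
that singularizing the digit `(1,1)` leaves the value of the continued fraction
unchanged. -/
theorem singularization_identity (α β : ℕ) (ε : ℝ) (hε : ε = 1 ∨ ε = -1)
    (hα : 1 < (α : ℝ) + ε) (hβ : 1 ≤ β) (y : ℝ) (hy : 0 < y) :
    (α : ℝ) + ε / (1 + 1 / ((β : ℝ) + y)) = ((α : ℝ) + ε) - ε / (((β : ℝ) + 1) + y) := by
  have hb : (0:ℝ) < (β : ℝ) + y := by positivity
  have hb1 : ((β : ℝ) + 1) + y ≠ 0 := by positivity
  have h1 : (1 : ℝ) + 1 / ((β : ℝ) + y) ≠ 0 := by positivity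
  field_simp
  ring
end

section
/- The speeded-up RCF-to-ECF conversion identity holds: if α_m is odd and α_{m+1} > 1, then the semi-regular continued fraction value of (..., (α_m,1), (α_{m+1},1), (α_{m+2},1), ...) equals that of (..., (α_m+1, −1), (2,−1)^{α_{m+1}−1}, (α_{m+2}+1, 1), ...), where (2,−1)^{j} denotes j consecutive copies of the digit (2,−1). -/
/-- The value of a finite semi-regular continued fraction digit string with tail
value `t`: `tailVal [(α₁,ε₁),...,(αₙ,εₙ)] t = 1/(α₁ + ε₁/(α₂ + ⋯ + εₙ·t))`,
where the innermost level is `1/(αₙ + εₙ·t)`. -/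
noncomputable def tailVal : List (ℤ × ℤ) → ℝ → ℝ
  | [], t => t
  | (a, e) :: r, t => 1 / ((a : ℝ) + (e : ℝ) * tailVal r t)

lemma replicate_val (s : ℝ) (hs0 : 0 ≤ s) (hs1 : s < 1) (L : List (ℤ × ℤ)) (t : ℝ)
    (h : tailVal L t = s) (k : ℕ) :
    tailVal (List.replicate k ((2 : ℤ), (-1 : ℤ)) ++ L) t
      = ((k : ℝ) - ((k : ℝ) - 1) * s) / (((k : ℝ) + 1) - (k : ℝ) * s) := by
  induction k with
  | zero => simp [h]
  | succ k ih =>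
    have hd : (0 : ℝ) < ((k : ℝ) + 1) - (k : ℝ) * s := by nlinarith [Nat.cast_nonneg (α := ℝ) k]
    have hd2 : (0 : ℝ) < ((k : ℝ) + 2) - ((k : ℝ) + 1) * s := by
      nlinarith [Nat.cast_nonneg (α := ℝ) k]
    rw [List.replicate_succ, List.cons_append]
    simp only [tailVal, ih]
    rw [Nat.cast_succ]
    field_simp
    ring_nf

/-- The speeded-up RCF-to-ECF conversion identity: if `α` is odd and the next digit
is `k + 1 > 1`, then `(α,1), (k+1,1), (c,1)` has the same continued fraction value
as `(α+1,−1)` followed by `k` copies of `(2,−1)` and then `(c+1,1)`. -/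
theorem rcf_to_ecf_speedup (α c : ℤ) (k : ℕ) (hα : Odd α) (hα1 : 1 ≤ α)
    (hk : 1 ≤ k) (hc : 1 ≤ c) (t : ℝ) (ht : 0 < t) (ht1 : t < 1) :
    tailVal [(α, 1), ((k : ℤ) + 1, 1), (c, 1)] t
      = tailVal ((α + 1, -1) :: (List.replicate k ((2 : ℤ), (-1 : ℤ)) ++ [(c + 1, 1)])) t := by
  have hc' : (1 : ℝ) ≤ (c : ℝ) := by exact_mod_cast hc
  have hα' : (1 : ℝ) ≤ (α : ℝ) := by exact_mod_cast hα1
  have hk' : (1 : ℝ) ≤ (k : ℝ) := by exact_mod_cast hk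
  set s : ℝ := 1 / ((c : ℝ) + 1 + t) with hs
  have hden : (0 : ℝ) < (c : ℝ) + 1 + t := by linarith
  have hs0 : 0 ≤ s := by positivity
  have hs1 : s < 1 := by
    rw [hs, div_lt_one hden]; linarith
  have hrep := replicate_val s hs0 hs1 [(c + 1, 1)] t
    (by simp only [tailVal]; rw [hs]; push_cast; ring_nf) k
  simp only [tailVal, hrep]
  have hd : (0 : ℝ) < ((k : ℝ) + 1) - (k : ℝ) * s := by nlinarith
  have hg : ((k : ℝ) - ((k : ℝ) - 1) * s) / (((k : ℝ) + 1) - (k : ℝ) * s) < 1 := by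
    rw [div_lt_one hd]; nlinarith
  have hct : (0 : ℝ) < (c : ℝ) + t := by linarith
  have h1 : (0 : ℝ) < (k : ℝ) + 1 + 1 / ((c : ℝ) + t) := by positivity
  have hseq : s * ((c : ℝ) + 1 + t) = 1 := by
    rw [hs]; field_simp
  push_cast
  rw [div_eq_div_iff] <;> [skip; positivity; nlinarith]
  field_simp
  nlinarith [hseq, sq_nonneg s]
end
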